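/- Let f : (Fin N → Bool) → (Fin N → Bool), let σ be any bijection of bitstrings of length N (in particular any element of the bitflip-and-permutation group), and let h(a) = ∑_{∅ ≠ S ⊆ Fin N} ∏_{i ∈ S} (if a i then -1 else 1). Then ∑_{x} h(σ(f x)) = 2^N · (|f⁻¹(σ⁻¹(0))| − 1). Consequently the transformed expectation tr(U_σ ρ(f) U_σ† O) = (1/2^N)∑_x h(σ(f x)) equals 0 for every bijective f, and equals +1 or −1 for every f with Simon hidden string s ≠ 0; the separation between the two classes is maintained (up to sign) under the symmetry transformations. -/
import Mathlib


/-- `f` has Simon hidden string `s`: `f x = f y ↔ (y = x ∨ y = x ⊕ s)`. -/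
def HasSimonString {N : ℕ} (f : (Fin N → Bool) → (Fin N → Bool)) (s : Fin N → Bool) : Prop :=
  ∀ x y, f x = f y ↔ (y = x ∨ y = fun i => Bool.xor (x i) (s i))

/-- The eigenvalue `h(a) = ∑_{∅≠S⊆Fin N} ∏_{i∈S} (-1)^{a i}` of the invariant observable
`O = ∑_i Z_i + ∑_{i<j} Z_i Z_j + … + Z_1⋯Z_N` on the basis state `|a⟩`. -/
def simonObs {N : ℕ} (a : Fin N → Bool) : ℤ :=
  ∑ S ∈ Finset.univ.powerset.filter (fun S : Finset (Fin N) => S.Nonempty),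
    ∏ i ∈ S, (if a i then -1 else 1)

lemma simonObs_eq {N : ℕ} (a : Fin N → Bool) :
    simonObs a = (if a = (fun _ => false) then (2:ℤ)^N else 0) - 1 := by
  have hfull : ∑ S ∈ (Finset.univ : Finset (Fin N)).powerset,
      ∏ i ∈ S, (if a i then (-1:ℤ) else 1)
      = ∏ i : Fin N, ((if a i then (-1:ℤ) else 1) + 1) := by
    rw [Finset.prod_add]
    exact Finset.sum_congr rfl (fun t _ => by simp)
  have hprod : ∏ i : Fin N, ((if a i then (-1:ℤ) else 1) + 1)
      = if a = (fun _ => false) then (2:ℤ)^N else 0 := by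
    by_cases h : a = (fun _ => false)
    · subst h; simp
    · rw [if_neg h]
      obtain ⟨i, hi⟩ : ∃ i, a i = true := by
        by_contra hc
        push_neg at hc
        exact h (funext fun i => by simpa using hc i)
      exact Finset.prod_eq_zero (Finset.mem_univ i) (by simp [hi])
  have hfilt : (Finset.univ.powerset.filter (fun S : Finset (Fin N) => S.Nonempty))
      = Finset.univ.powerset.erase ∅ := by
    ext S
    simp [Finset.nonempty_iff_ne_empty]
  rw [simonObs, hfilt, Finset.sum_erase_eq_sub (by simp), hfull, hprod]
  simp

lemma key {N : ℕ} (f : (Fin N → Bool) → (Fin N → Bool))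
    (σ : (Fin N → Bool) ≃ (Fin N → Bool)) :
    (∑ x : Fin N → Bool, simonObs (σ (f x))) =
      2 ^ N *
        (((Finset.univ.filter (fun x => f x = σ.symm (fun _ => false))).card : ℤ) - 1) := by
  have hc : ∀ x, (σ (f x) = fun _ => false) ↔ f x = σ.symm (fun _ => false) := by
    intro x; exact σ.apply_eq_iff_eq_symm_apply
  calc (∑ x : Fin N → Bool, simonObs (σ (f x)))
      = ∑ x : Fin N → Bool,
          ((if f x = σ.symm (fun _ => false) then (2:ℤ)^N else 0) - 1) := by
        refine Finset.sum_congr rfl (fun x _ => ?_)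
        rw [simonObs_eq]
        congr 1
        simp [hc x]
    _ = (∑ x : Fin N → Bool, (if f x = σ.symm (fun _ => false) then (2:ℤ)^N else 0))
          - 2^N := by
        rw [Finset.sum_sub_distrib]
        congr 1
        simp [Finset.card_univ]
    _ = ((Finset.univ.filter (fun x => f x = σ.symm (fun _ => false))).card : ℤ) * 2^N
          - 2^N := by
        congr 1
        rw [← Finset.sum_filter, Finset.sum_const, nsmul_eq_mul]
    _ = 2 ^ N *
        (((Finset.univ.filter (fun x => f x = σ.symm (fun _ => false))).card : ℤ) - 1) := by
        ring

/-- Under any output bijection `σ` (in particular any bitflip-and-permutation element),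
`∑_x h(σ(f x)) = 2^N (|f⁻¹(σ⁻¹ 0)| − 1)`; hence the transformed expectation
`tr(U_σ ρ(f) U_σ† O)` is `0` for every bijective `f` and `±1` for every 2:1 `f`:
the class separation is maintained up to sign under the symmetry transformations. -/
theorem simon_separation_maintained_under_symmetry {N : ℕ}
    (f : (Fin N → Bool) → (Fin N → Bool))
    (σ : (Fin N → Bool) ≃ (Fin N → Bool)) :
    (∑ x : Fin N → Bool, simonObs (σ (f x))) =
        2 ^ N *
          (((Finset.univ.filter (fun x => f x = σ.symm (fun _ => false))).card : ℤ) - 1) ∧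
    (Function.Bijective f →
      ((∑ x : Fin N → Bool, simonObs (σ (f x)) : ℤ) : ℝ) / 2 ^ N = 0) ∧
    (∀ s : Fin N → Bool, s ≠ (fun _ => false) → HasSimonString f s →
      (((∑ x : Fin N → Bool, simonObs (σ (f x)) : ℤ) : ℝ) / 2 ^ N = 1 ∨
       ((∑ x : Fin N → Bool, simonObs (σ (f x)) : ℤ) : ℝ) / 2 ^ N = -1)) := by
  have hkey := key f σ
  set c0 := σ.symm (fun _ => false) with hc0
  refine ⟨hkey, ?_, ?_⟩
  · intro hf
    have hcard : (Finset.univ.filter (fun x => f x = c0)).card = 1 := by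
      have : (Finset.univ.filter (fun x => f x = c0))
          = {(Equiv.ofBijective f hf).symm c0} := by
        ext x
        simp only [Finset.mem_filter, Finset.mem_univ, true_and, Finset.mem_singleton]
        constructor
        · intro hx
          exact ((Equiv.ofBijective f hf).symm_apply_eq).2 hx.symm |>.symm
        · intro hx
          subst hx
          exact (Equiv.ofBijective f hf).apply_symm_apply c0
      rw [this, Finset.card_singleton]
    rw [hkey, hcard]
    simp
  · intro s hs hsimon
    have h2N : ((2:ℝ)^N) ≠ 0 := by positivity
    by_cases hex : ∃ x0, f x0 = c0
    · obtain ⟨x0, hx0⟩ := hex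
      set x1 : Fin N → Bool := fun i => Bool.xor (x0 i) (s i) with hx1
      have hne : x0 ≠ x1 := by
        obtain ⟨i, hi⟩ : ∃ i, s i = true := by
          by_contra hc
          push_neg at hc
          exact hs (funext fun i => by simpa using hc i)
        intro h
        have := congrFun h i
        rw [hx1] at this
        simp [hi] at this
      have hcard : (Finset.univ.filter (fun x => f x = c0)).card = 2 := by
        have hset : (Finset.univ.filter (fun x => f x = c0)) = {x0, x1} := by
          ext y
          simp only [Finset.mem_filter, Finset.mem_univ, true_and, Finset.mem_insert,
            Finset.mem_singleton]
          constructor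
          · intro hy
            have : f x0 = f y := by rw [hx0, hy]
            rcases (hsimon x0 y).1 this with h | h
            · exact Or.inl h
            · exact Or.inr h
          · rintro (rfl | rfl)
            · exact hx0
            · rw [← hx0]
              exact ((hsimon x0 x1).2 (Or.inr rfl)).symm
        rw [hset, Finset.card_pair hne]
      left
      rw [hkey, hcard]
      push_cast
      field_simp
    · right
      have hcard : (Finset.univ.filter (fun x => f x = c0)).card = 0 := by
        rw [Finset.card_eq_zero, Finset.filter_eq_empty_iff]
        intro x _
        exact fun h => hex ⟨x, h⟩
      rw [hkey, hcard]
      push_cast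
      field_simp
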